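/- Let R be a Dedekind domain, I a nonzero ideal of R, and M a finitely generated R-module. If R ⊕ M ≅ I ⊕ M as R-modules, then I is a principal ideal (equivalently, I ≅ R as an R-module). -/

import Mathlib

/-!
Dividing out torsion turns `R × M ≅ I × M` into `R × P ≅ I × P` with `P` finitely generated and
torsion-free, hence flat and so projective over the Dedekind domain `R`. Adding a complement of `P`
in some `Rⁿ` gives `R × Rⁿ ≅ I × Rⁿ`. Followed by the inclusion `I × Rⁿ ⊆ Rⁿ⁺¹`, this is a matrix
`A` whose image is `{v | v 0 ∈ I}`. Then `det A ∈ I` (look at `A (adj A e₀) = det A • e₀`), and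
each `x ∈ I` is `det A * det B` where `A B = diag(x, 1, …, 1)`, so `I = (det A)`.
-/

open Submodule
open scoped nonZeroDivisors

section Torsion

variable {R : Type*} [CommRing R] {A B : Type*} [AddCommGroup A] [AddCommGroup B]
  [Module R A] [Module R B]

theorem Submodule.map_torsion_linearEquiv (e : A ≃ₗ[R] B) :
    (torsion R A).map (e : A →ₗ[R] B) = torsion R B := by
  ext y
  simp only [mem_map_equiv, mem_torsion_iff, Submonoid.smul_def]
  exact exists_congr fun a => by rw [← map_smul, LinearEquiv.map_eq_zero_iff]

noncomputable def LinearEquiv.quotTorsion (e : A ≃ₗ[R] B) :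
    (A ⧸ torsion R A) ≃ₗ[R] B ⧸ torsion R B :=
  Quotient.equiv _ _ e (map_torsion_linearEquiv e)

theorem Submodule.torsion_prod_of_isTorsionFree [Module.IsTorsionFree R A] :
    torsion R (A × B) = (⊥ : Submodule R A).prod (torsion R B) := by
  have smul_eq_zero (r : R⁰) (a : A) : r • a = 0 ↔ a = 0 :=
    ⟨(isRegular_iff_mem_nonZeroDivisors.mpr r.2).isSMulRegular.right_eq_zero_of_smul,
      fun ha => by rw [ha, smul_zero]⟩
  ext ⟨a, b⟩
  simp only [mem_torsion_iff, mem_prod, mem_bot, Prod.smul_mk, Prod.mk_eq_zero, smul_eq_zero]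
  exact ⟨fun ⟨r, ha, hb⟩ => ⟨ha, r, hb⟩, fun ⟨ha, r, hb⟩ => ⟨r, ha, hb⟩⟩

variable (A B) in
noncomputable def Submodule.quotTorsionProdEquiv [Module.IsTorsionFree R A] :
    ((A × B) ⧸ torsion R (A × B)) ≃ₗ[R] A × (B ⧸ torsion R B) :=
  (quotEquivOfEq _ _ (by rw [LinearMap.ker_prodMap, LinearMap.ker_id, ker_mkQ,
      torsion_prod_of_isTorsionFree])).trans
    (LinearMap.quotKerEquivOfSurjective (LinearMap.prodMap LinearMap.id (torsion R B).mkQ)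
      (Prod.map_surjective.mpr ⟨Function.surjective_id, mkQ_surjective _⟩))

end Torsion

theorem Module.Projective.exists_linearEquiv_prod (R P : Type*) [Ring R] [AddCommGroup P]
    [Module R P] [Module.Finite R P] [Module.Projective R P] :
    ∃ (n : ℕ) (N : Submodule R (Fin n → R)), Nonempty ((Fin n → R) ≃ₗ[R] N × P) := by
  obtain ⟨n, f, g, -, -, hfg⟩ := Module.Finite.exists_comp_eq_id_of_projective R P
  exact ⟨n, LinearMap.ker f, ⟨((LinearMap.exact_subtype_ker_map f).splitSurjectiveEquiv
    (Submodule.injective_subtype _) ⟨g, hfg⟩).1⟩⟩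

section Summand

variable {R : Type*} [Semiring R] {X Y P N F : Type*} [AddCommMonoid X] [AddCommMonoid Y]
  [AddCommMonoid P] [AddCommMonoid N] [AddCommMonoid F] [Module R X] [Module R Y] [Module R P]
  [Module R N] [Module R F]

def LinearEquiv.prodSummandAssoc (s : F ≃ₗ[R] N × P) : (X × F) ≃ₗ[R] (X × P) × N :=
  (LinearEquiv.prodCongr (LinearEquiv.refl R X) (s.trans (LinearEquiv.prodComm R N P))).trans
    (LinearEquiv.prodAssoc R X P N).symm

def LinearEquiv.prodCongrOfSummand (e : (X × P) ≃ₗ[R] Y × P) (s : F ≃ₗ[R] N × P) :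
    (X × F) ≃ₗ[R] Y × F :=
  (prodSummandAssoc s).trans <|
    (LinearEquiv.prodCongr e (LinearEquiv.refl R N)).trans (prodSummandAssoc s).symm

end Summand

open Matrix in
theorem Matrix.exists_mul_eq_of_forall_mulVec {R : Type*} [CommSemiring R] {m n : Type*}
    [Fintype n] (A : Matrix m n R) (D : Matrix m m R) (hD : ∀ j, ∃ u, A *ᵥ u = fun i => D i j) :
    ∃ B : Matrix n m R, A * B = D := by
  choose u hu using hD
  refine ⟨(Matrix.of u)ᵀ, Matrix.transpose_injective (funext fun j => ?_)⟩
  rw [Matrix.transpose_mul, Matrix.transpose_transpose, Matrix.mul_apply_eq_vecMul,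
    Matrix.vecMul_transpose]
  exact hu j

open Matrix in
theorem Ideal.eq_span_det_of_range_mulVecLin {R : Type*} [CommRing R] {k : ℕ} (I : Ideal R)
    (A : Matrix (Fin (k + 1)) (Fin (k + 1)) R)
    (hA : LinearMap.range A.mulVecLin = Submodule.comap (LinearMap.proj 0) I) :
    I = Ideal.span {A.det} := by
  have mem_range {v : Fin (k + 1) → R} : v 0 ∈ I ↔ ∃ u, A *ᵥ u = v := by
    rw [← LinearMap.proj_apply (R := R) 0 v, ← Submodule.mem_comap, ← hA]; rfl
  refine le_antisymm (fun x hx => ?_) ?_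
  · let D : Matrix (Fin (k + 1)) (Fin (k + 1)) R := Matrix.diagonal (Fin.cons x 1)
    obtain ⟨B, hB⟩ := A.exists_mul_eq_of_forall_mulVec D fun j => mem_range.mp <| by
      refine Fin.cases ?_ (fun j => ?_) j <;>
        simp [D, hx, diagonal_apply_ne _ (Fin.succ_ne_zero _).symm]
    have hdet : A.det * B.det = x := by
      rw [← Matrix.det_mul, hB, Matrix.det_diagonal, Fin.prod_univ_succ]
      simp
    exact Ideal.mem_span_singleton'.mpr ⟨B.det, by rw [mul_comm, hdet]⟩
  · rw [Ideal.span_le, Set.singleton_subset_iff]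
    obtain ⟨u, hu⟩ : ∃ u, A *ᵥ u = A.det • Pi.single 0 1 :=
      ⟨A.adjugate *ᵥ Pi.single 0 1, by
        rw [Matrix.mulVec_mulVec, Matrix.mul_adjugate, Matrix.smul_mulVec, Matrix.one_mulVec]⟩
    simpa using mem_range.mpr ⟨u, hu⟩

theorem Ideal.range_consLinearEquiv_comp_prodMap_subtype {R : Type*} [Semiring R] {k : ℕ}
    (I : Ideal R) :
    LinearMap.range ((Fin.consLinearEquiv R fun _ : Fin (k + 1) => R).toLinearMap ∘ₗ
      I.subtype.prodMap LinearMap.id) = Submodule.comap (LinearMap.proj 0) I := by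
  ext v
  constructor
  · rintro ⟨⟨a, w⟩, rfl⟩
    simp
  · intro hv
    exact ⟨(⟨v 0, hv⟩, Fin.tail v), Fin.cons_self_tail v⟩

theorem Submodule.IsPrincipal.of_linearEquiv_prod_pi {R : Type*} [CommRing R] {k : ℕ}
    (I : Ideal R) (E : (R × (Fin k → R)) ≃ₗ[R] I × (Fin k → R)) : I.IsPrincipal := by
  let cons := Fin.consLinearEquiv R fun _ : Fin (k + 1) => R
  let f := (cons.toLinearMap ∘ₗ I.subtype.prodMap LinearMap.id) ∘ₗ (cons.symm ≪≫ₗ E).toLinearMap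
  have hf : LinearMap.range (LinearMap.toMatrix' f).mulVecLin =
      Submodule.comap (LinearMap.proj 0) I := by
    rw [← Matrix.toLin'_apply', Matrix.toLin'_toMatrix',
      LinearMap.range_comp_of_range_eq_top _ (LinearEquiv.range _),
      I.range_consLinearEquiv_comp_prodMap_subtype]
  exact ⟨_, I.eq_span_det_of_range_mulVecLin _ hf⟩

theorem isPrincipal_of_prod_equiv_general (R : Type*) [CommRing R]
    [IsDedekindDomain R] (I : Ideal R) (M : Type*) [AddCommGroup M]
    [Module R M] [Module.Finite R M] (h : Nonempty ((R × M) ≃ₗ[R] (↥I × M))) :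
    Submodule.IsPrincipal I := by
  obtain ⟨e⟩ := h
  let e' : (R × (M ⧸ torsion R M)) ≃ₗ[R] I × (M ⧸ torsion R M) :=
    (quotTorsionProdEquiv R M).symm ≪≫ₗ e.quotTorsion ≪≫ₗ quotTorsionProdEquiv I M
  have : Module.FinitePresentation R (M ⧸ torsion R M) := Module.finitePresentation_of_finite _ _
  have : Module.Projective R (M ⧸ torsion R M) := Module.Flat.projective_of_finitePresentation
  obtain ⟨n, N, ⟨s⟩⟩ := Module.Projective.exists_linearEquiv_prod R (M ⧸ torsion R M)
  exact .of_linearEquiv_prod_pi I (e'.prodCongrOfSummand s)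

/-- Cancellation: if `R` is a Dedekind domain, `I` a nonzero ideal and `M` a finitely
generated `R`-module with `R ⊕ M ≅ I ⊕ M`, then `I` is principal. -/
theorem isPrincipal_of_prod_equiv (R : Type*) [CommRing R] [IsDomain R]
    [IsDedekindDomain R] (I : Ideal R) (hI : I ≠ ⊥) (M : Type*) [AddCommGroup M]
    [Module R M] [Module.Finite R M] (h : Nonempty ((R × M) ≃ₗ[R] (↥I × M))) :
    Submodule.IsPrincipal I :=
  isPrincipal_of_prod_equiv_general R I M h
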